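/- Let A be a unital algebra over a field and R a Rota–Baxter operator of weight 0 on A. Then the unit element 1 is not in the image of R. -/
import Mathlib

theorem one_not_in_image {F A : Type*} [Field F] [NonAssocRing A] [Nontrivial A] [Module F A]
    [SMulCommClass F A A] [IsScalarTower F A A] (h2 : (2 : F) ≠ 0) (R : A →ₗ[F] A)
    (hR : ∀ x y : A, R x * R y = R (R x * y + x * R y)) :
    (1 : A) ∉ Set.range R := by
  rintro ⟨a, ha⟩
  have := hR a a
  rw [ha, one_mul, mul_one, one_mul, map_add, ha] at this
  exact one_ne_zero (left_eq_add.mp this)
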